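/- arXiv:2605.30515 — 3 statements merged into one kernel-verified Lean document; each statement's English description precedes it below -/
import Mathlib

section
/- Let Ω be a finite set with |Ω| ≥ 2, let X = {x_1, …, x_m} with m ≥ 3, and let p be an injective probability measure on 2^Ω. For t ∈ (0,1) define the valuation v_t : X → ℝ by v_t(x_1) = 1, v_t(x_l) = t^{l-1} for 2 ≤ l ≤ m-1, and v_t(x_m) = 0. Then for all but finitely many t ∈ (0,1), the pair (v_t, p) is a strict SEU preference; that is, for all but finitely many t ∈ (0,1), every pair of distinct acts f ≠ g satisfies Σ_{ω∈Ω} p({ω}) v_t(f(ω)) ≠ Σ_{ω∈Ω} p({ω}) v_t(g(ω)). -/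
/-- A belief (finitely additive, injective probability measure) on the
subsets of an event `Ω' ⊆ Ω`. -/
structure BeliefOn {Ω : Type*} [Fintype Ω] [DecidableEq Ω] (Ω' : Finset Ω) where
  P : Finset Ω → ℝ
  nonneg : ∀ A : Finset Ω, A ⊆ Ω' → 0 ≤ P A
  le_one : ∀ A : Finset Ω, A ⊆ Ω' → P A ≤ 1
  total : P Ω' = 1
  additive : ∀ A B : Finset Ω, A ⊆ Ω' → B ⊆ Ω' → Disjoint A B → P (A ∪ B) = P A + P B
  inj : ∀ A B : Finset Ω, A ⊆ Ω' → B ⊆ Ω' → P A = P B → A = B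

/-- A belief on the whole state space `Ω`. -/
abbrev Belief (Ω : Type*) [Fintype Ω] [DecidableEq Ω] := BeliefOn (Finset.univ : Finset Ω)

open Polynomial in
/-- Let `Ω` be finite with `|Ω| ≥ 2`, `X = Fin m` (outcomes `x_1, …, x_m`)
with `m ≥ 3`, and `p` an injective probability measure on `2^Ω`.  For `t ∈ (0,1)` let
`v_t(x_1) = 1 = t^0`, `v_t(x_l) = t^(l-1)` for `2 ≤ l ≤ m-1`, and `v_t(x_m) = 0`.
Then for all but finitely many `t ∈ (0,1)` the pair `(v_t, p)` is a strict SEU preference: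
the set of `t ∈ (0,1)` at which some pair of distinct acts has equal expected utility
is finite. -/
theorem lemma1_generic_strictness (Ω : Type*) [Fintype Ω] [DecidableEq Ω]
    (hΩ : 2 ≤ Fintype.card Ω) (m : ℕ) (hm : 3 ≤ m) (p : Belief Ω) :
    Set.Finite { t : ℝ | t ∈ Set.Ioo (0 : ℝ) 1 ∧
      ∃ f g : Ω → Fin m, f ≠ g ∧
        (∑ ω : Ω, p.P {ω} * (if (f ω : ℕ) = m - 1 then (0 : ℝ) else t ^ (f ω : ℕ))) =
        (∑ ω : Ω, p.P {ω} * (if (g ω : ℕ) = m - 1 then (0 : ℝ) else t ^ (g ω : ℕ))) } := by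
  classical
  -- p of a finite set is the sum of its singletons
  have hempty : p.P ∅ = 0 := by
    have h := p.additive ∅ ∅ (by simp) (by simp) (by simp)
    simp at h
    linarith
  have hsum : ∀ A : Finset Ω, p.P A = ∑ ω ∈ A, p.P {ω} := by
    intro A
    induction A using Finset.induction_on with
    | empty => simpa using hempty
    | @insert a A ha ih =>
      have h := p.additive {a} A (by simp) (by simp)
        (by simpa using ha)
      rw [← Finset.insert_eq] at h
      rw [h, ih, Finset.sum_insert ha]
  -- the polynomial associated to an act
  set Q : (Ω → Fin m) → Polynomial ℝ := fun f =>
    ∑ ω : Ω, Polynomial.C (p.P {ω}) *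
      (if (f ω : ℕ) = m - 1 then 0 else Polynomial.X ^ (f ω : ℕ)) with hQ
  have heval : ∀ (f : Ω → Fin m) (t : ℝ), (Q f).eval t =
      ∑ ω : Ω, p.P {ω} * (if (f ω : ℕ) = m - 1 then (0 : ℝ) else t ^ (f ω : ℕ)) := by
    intro f t
    rw [hQ]
    simp [Polynomial.eval_finset_sum, apply_ite (Polynomial.eval t)]
  have hcoeff : ∀ (f : Ω → Fin m) (k : ℕ), k ≠ m - 1 →
      (Q f).coeff k = p.P (Finset.univ.filter fun ω => (f ω : ℕ) = k) := by
    intro f k hk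
    rw [hQ, hsum (Finset.univ.filter fun ω => (f ω : ℕ) = k),
      Polynomial.finset_sum_coeff, Finset.sum_filter]
    refine Finset.sum_congr rfl fun ω _ => ?_
    by_cases h2 : (f ω : ℕ) = k
    · rw [if_pos h2]
      have h1 : ¬ (f ω : ℕ) = m - 1 := h2 ▸ hk
      simp [h1, Polynomial.coeff_X_pow, h2, hk]
    · rw [if_neg h2]
      by_cases h1 : (f ω : ℕ) = m - 1
      · simp [h1]
      · simp [h1, Polynomial.coeff_X_pow, h2, Ne.symm h2]
  -- injectivity of Q
  have hQinj : ∀ f g : Ω → Fin m, Q f = Q g → f = g := by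
    intro f g h
    have hsets : ∀ k : ℕ, k ≠ m - 1 →
        (Finset.univ.filter fun ω => (f ω : ℕ) = k) =
        (Finset.univ.filter fun ω => (g ω : ℕ) = k) := by
      intro k hk
      apply p.inj _ _ (by simp) (by simp)
      rw [← hcoeff f k hk, ← hcoeff g k hk, h]
    funext ω
    by_cases h1 : (f ω : ℕ) = m - 1
    · by_cases h2 : (g ω : ℕ) = m - 1
      · exact Fin.ext (h1.trans h2.symm)
      · have : ω ∈ Finset.univ.filter fun ω' => (g ω' : ℕ) = (g ω : ℕ) := by simp
        rw [← hsets _ h2] at this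
        simp at this
        exact absurd (this ▸ h1) h2
    · have : ω ∈ Finset.univ.filter fun ω' => (f ω' : ℕ) = (f ω : ℕ) := by simp
      rw [hsets _ h1] at this
      simp at this
      exact Fin.ext this.symm
  -- each bad t is a root of some nonzero polynomial Q f - Q g
  apply Set.Finite.subset
    (s := ⋃ fg : (Ω → Fin m) × (Ω → Fin m),
      {t : ℝ | Q fg.1 ≠ Q fg.2 ∧ (Q fg.1 - Q fg.2).IsRoot t})
  · apply Set.finite_iUnion
    intro ⟨f, g⟩
    by_cases h : Q f = Q g
    · simp [h]
    · exact (Polynomial.finite_setOf_isRoot (sub_ne_zero.mpr h)).subset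
        (fun t ht => ht.2)
  · rintro t ⟨-, f, g, hne, heq⟩
    refine Set.mem_iUnion.mpr ⟨(f, g), fun h => hne (hQinj f g h), ?_⟩
    simp only [Polynomial.IsRoot, Polynomial.eval_sub, heval, heq, sub_self]
end

section
/- Let Ω be a finite set, X = {x_1, …, x_m} with m ≥ 3, and let p be an injective probability measure on 2^Ω. For t ∈ (0,1) define v_t : X → ℝ by v_t(x_1) = 1, v_t(x_l) = t^{l-1} for 2 ≤ l ≤ m-1, and v_t(x_m) = 0. Then for every fixed pair of distinct acts f ≠ g, the set { t ∈ (0,1) : Σ_{ω∈Ω} p({ω}) v_t(f(ω)) = Σ_{ω∈Ω} p({ω}) v_t(g(ω)) } is finite. -/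
lemma BeliefOn.P_empty {Ω : Type*} [Fintype Ω] [DecidableEq Ω] (p : Belief Ω) :
    p.P ∅ = 0 := by
  have h := p.additive ∅ ∅ (Finset.subset_univ _) (Finset.subset_univ _) (by simp)
  simp at h
  linarith

lemma BeliefOn.P_eq_sum {Ω : Type*} [Fintype Ω] [DecidableEq Ω] (p : Belief Ω)
    (A : Finset Ω) : p.P A = ∑ ω ∈ A, p.P {ω} := by
  induction A using Finset.induction_on with
  | empty => simp [BeliefOn.P_empty]
  | @insert a s ha ih =>
    have := p.additive {a} s (Finset.subset_univ _) (Finset.subset_univ _) (by simpa)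
    rw [Finset.insert_eq, this, ih, ← Finset.insert_eq, Finset.sum_insert ha]

/-- Let `Ω` be finite, `X = Fin m` (outcomes `x_1, …, x_m`) with `m ≥ 3`,
and `p` an injective probability measure on `2^Ω`.  For `t ∈ (0,1)` let `v_t(x_1) = 1 = t^0`,
`v_t(x_l) = t^(l-1)` for `2 ≤ l ≤ m-1`, and `v_t(x_m) = 0`.  Then for every fixed pair of
distinct acts `f ≠ g`, the set of `t ∈ (0,1)` at which `f` and `g` have equal expected
utility under `(v_t, p)` is finite. -/
theorem indifference_set_finite (Ω : Type*) [Fintype Ω] [DecidableEq Ω]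
    (hΩ : 2 ≤ Fintype.card Ω) (m : ℕ) (hm : 3 ≤ m) (p : Belief Ω)
    (f g : Ω → Fin m) (hfg : f ≠ g) :
    Set.Finite { t : ℝ | t ∈ Set.Ioo (0 : ℝ) 1 ∧
      (∑ ω : Ω, p.P {ω} * (if (f ω : ℕ) = m - 1 then (0 : ℝ) else t ^ (f ω : ℕ))) =
      (∑ ω : Ω, p.P {ω} * (if (g ω : ℕ) = m - 1 then (0 : ℝ) else t ^ (g ω : ℕ))) } := by
  classical
  set Q : Polynomial ℝ :=
    (∑ ω : Ω, Polynomial.C (p.P {ω}) *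
      (if (f ω : ℕ) = m - 1 then 0 else Polynomial.X ^ (f ω : ℕ))) -
    (∑ ω : Ω, Polynomial.C (p.P {ω}) *
      (if (g ω : ℕ) = m - 1 then 0 else Polynomial.X ^ (g ω : ℕ))) with hQ
  have hcoeff : ∀ k : ℕ, Q.coeff k =
      (∑ ω : Ω, if (f ω : ℕ) = m - 1 then 0 else if (f ω : ℕ) = k then p.P {ω} else 0) -
      (∑ ω : Ω, if (g ω : ℕ) = m - 1 then 0 else if (g ω : ℕ) = k then p.P {ω} else 0) := by
    intro k
    rw [hQ, Polynomial.coeff_sub, Polynomial.finset_sum_coeff, Polynomial.finset_sum_coeff]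
    congr 1 <;> refine Finset.sum_congr rfl fun ω _ => ?_ <;> split
    · simp
    · rw [Polynomial.coeff_C_mul, Polynomial.coeff_X_pow]
      rename_i h1
      by_cases h2 : (f ω : ℕ) = k
      · simp [h2]
      · simp [h2, Ne.symm h2]
    · simp
    · rw [Polynomial.coeff_C_mul, Polynomial.coeff_X_pow]
      rename_i h1
      by_cases h2 : (g ω : ℕ) = k
      · simp [h2]
      · simp [h2, Ne.symm h2]
  have hQne : Q ≠ 0 := by
    intro h0
    have hfib : ∀ k : ℕ, k ≠ m - 1 →
        Finset.univ.filter (fun ω => (f ω : ℕ) = k) =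
        Finset.univ.filter (fun ω => (g ω : ℕ) = k) := by
      intro k hk
      apply p.inj _ _ (Finset.subset_univ _) (Finset.subset_univ _)
      rw [BeliefOn.P_eq_sum, BeliefOn.P_eq_sum]
      have hc : Q.coeff k = 0 := by rw [h0]; simp
      rw [hcoeff k] at hc
      have hl : (∑ ω : Ω, if (f ω : ℕ) = m - 1 then 0 else
          if (f ω : ℕ) = k then p.P {ω} else 0) =
          ∑ ω ∈ Finset.univ.filter (fun ω => (f ω : ℕ) = k), p.P {ω} := by
        rw [Finset.sum_filter]
        refine Finset.sum_congr rfl fun ω _ => ?_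
        by_cases h1 : (f ω : ℕ) = k
        · simp [h1, hk]
        · simp [h1]
      have hr : (∑ ω : Ω, if (g ω : ℕ) = m - 1 then 0 else
          if (g ω : ℕ) = k then p.P {ω} else 0) =
          ∑ ω ∈ Finset.univ.filter (fun ω => (g ω : ℕ) = k), p.P {ω} := by
        rw [Finset.sum_filter]
        refine Finset.sum_congr rfl fun ω _ => ?_
        by_cases h1 : (g ω : ℕ) = k
        · simp [h1, hk]
        · simp [h1]
      rw [hl, hr] at hc
      linarith
    apply hfg
    funext ω
    by_cases h1 : (f ω : ℕ) = m - 1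
    · by_cases h2 : (g ω : ℕ) = m - 1
      · exact Fin.ext (h1.trans h2.symm)
      · have := hfib (g ω : ℕ) h2
        have hω : ω ∈ Finset.univ.filter (fun ω' => (g ω' : ℕ) = (g ω : ℕ)) := by simp
        rw [← this] at hω
        simp only [Finset.mem_filter] at hω
        exact absurd (hω.2 ▸ h1) h2
    · have := hfib (f ω : ℕ) h1
      have hω : ω ∈ Finset.univ.filter (fun ω' => (f ω' : ℕ) = (f ω : ℕ)) := by simp
      rw [this] at hω
      simp only [Finset.mem_filter] at hω
      exact Fin.ext hω.2.symm
  have hsub : { t : ℝ | t ∈ Set.Ioo (0 : ℝ) 1 ∧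
      (∑ ω : Ω, p.P {ω} * (if (f ω : ℕ) = m - 1 then (0 : ℝ) else t ^ (f ω : ℕ))) =
      (∑ ω : Ω, p.P {ω} * (if (g ω : ℕ) = m - 1 then (0 : ℝ) else t ^ (g ω : ℕ))) } ⊆
      { t : ℝ | Q.IsRoot t } := by
    intro t ht
    obtain ⟨-, heq⟩ := ht
    show Q.eval t = 0
    rw [hQ]
    simp only [Polynomial.eval_sub, Polynomial.eval_finset_sum, Polynomial.eval_mul,
      Polynomial.eval_C]
    have hev : ∀ (h : Ω → Fin m),
        (∑ ω : Ω, p.P {ω} * Polynomial.eval t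
          (if (h ω : ℕ) = m - 1 then 0 else Polynomial.X ^ (h ω : ℕ))) =
        ∑ ω : Ω, p.P {ω} * (if (h ω : ℕ) = m - 1 then (0 : ℝ) else t ^ (h ω : ℕ)) := by
      intro h
      refine Finset.sum_congr rfl fun ω _ => ?_
      split <;> simp
    rw [hev f, hev g, heq]
    ring
  exact (Polynomial.finite_setOf_isRoot hQne).subset hsub
end

section
/- (Claim 1) Let s : P^n → S be a locally bilateral assignment rule. Then for every agent i ∈ N, either s_i(p) ≠ ∅ for all belief profiles p ∈ P^n, or s_i(p) = ∅ for all belief profiles p ∈ P^n. -/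
namespace BeliefOn

variable {Ω : Type*} [Fintype Ω] [DecidableEq Ω]

theorem empty_zero (b : Belief Ω) : b.P ∅ = 0 := by
  have h := b.additive ∅ ∅ (Finset.empty_subset _) (Finset.empty_subset _) (by simp)
  simp only [Finset.union_empty] at h
  linarith

theorem mono (b : Belief Ω) {A B : Finset Ω} (hAB : A ⊆ B) : b.P A ≤ b.P B := by
  have h := b.additive A (B \ A) (Finset.subset_univ _) (Finset.subset_univ _)
    Finset.disjoint_sdiff
  rw [Finset.union_sdiff_of_subset hAB] at h
  have := b.nonneg (B \ A) (Finset.subset_univ _)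
  linarith

theorem pos_of_nonempty (b : Belief Ω) {A : Finset Ω} (h : A.Nonempty) : 0 < b.P A := by
  rcases (b.nonneg A (Finset.subset_univ _)).lt_or_eq with h1 | h1
  · exact h1
  · exact absurd (b.inj A ∅ (Finset.subset_univ _) (Finset.empty_subset _)
      (by rw [← h1, empty_zero])) h.ne_empty

/-- The conditional belief `p|Ω'` of a belief `p` on a nonempty event `Ω'`. -/
noncomputable def cond (b : Belief Ω) (Ω' : Finset Ω) (h : Ω'.Nonempty) : BeliefOn Ω' where
  P A := b.P A / b.P Ω'
  nonneg A _ := div_nonneg (b.nonneg A (Finset.subset_univ _)) (b.pos_of_nonempty h).le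
  le_one A hA := (div_le_one (b.pos_of_nonempty h)).mpr (b.mono hA)
  total := div_self (b.pos_of_nonempty h).ne'
  additive A B _ _ hd := by
    try simp only
    rw [b.additive A B (Finset.subset_univ _) (Finset.subset_univ _) hd, add_div]
  inj A B _ _ hP := b.inj A B (Finset.subset_univ _) (Finset.subset_univ _)
    (by
      have hc : b.P Ω' ≠ 0 := (b.pos_of_nonempty h).ne'
      try simp only at hP
      exact (div_left_inj' hc).mp hP)

end BeliefOn
section Rules

variable {Ω : Type*} [Fintype Ω] [DecidableEq Ω] {n : ℕ}

/-- `A` is an `n`-component partition of the event `Ω'` (components may be empty). -/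
def IsPartitionOf (Ω' : Finset Ω) (A : Fin n → Finset Ω) : Prop :=
  (∀ i, A i ⊆ Ω') ∧ (∀ i j, i ≠ j → Disjoint (A i) (A j)) ∧
    Finset.univ.biUnion A = Ω'

/-- `𝔸` is a proper covering of `Ω'`: its elements are subsets of `Ω'` whose union is `Ω'`,
no element is a strict subset of another, and their intersection is empty. -/
def ProperCovering (Ω' : Finset Ω) (𝔸 : Finset (Finset Ω)) : Prop :=
  (∀ A ∈ 𝔸, A ⊆ Ω') ∧ (∀ ω ∈ Ω', ∃ A ∈ 𝔸, ω ∈ A) ∧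
    (∀ A ∈ 𝔸, ∀ B ∈ 𝔸, A ≠ B → ¬A ⊂ B) ∧ (∀ ω ∈ Ω', ∃ A ∈ 𝔸, ω ∉ A)

/-- A constant `Ω'`-assignment rule. -/
def IsConstantRule (Ω' : Finset Ω) (s : (Fin n → BeliefOn Ω') → Fin n → Finset Ω) : Prop :=
  ∃ A : Fin n → Finset Ω, IsPartitionOf Ω' A ∧ ∀ q, s q = A

/-- An `(i,j)`-dictatorial `Ω'`-assignment rule: agent `i` receives the element of a
proper covering `𝔸` maximizing `pᵢ`, agent `j` receives its complement in `Ω'`,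
all other agents receive `∅`. -/
def IsDictatorialRule (Ω' : Finset Ω) (s : (Fin n → BeliefOn Ω') → Fin n → Finset Ω)
    (i j : Fin n) : Prop :=
  i ≠ j ∧ ∃ 𝔸 : Finset (Finset Ω), ProperCovering Ω' 𝔸 ∧
    ∀ q : Fin n → BeliefOn Ω',
      (s q i ∈ 𝔸 ∧ ∀ A ∈ 𝔸, (q i).P A ≤ (q i).P (s q i)) ∧
      s q j = Ω' \ s q i ∧ ∀ k, k ≠ i → k ≠ j → s q k = ∅

/-- An `(i,j)`-consensual `Ω'`-assignment rule with some default `A`,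
`∅ ≠ A ⊊ Ω'`. -/
def IsConsensualRule (Ω' : Finset Ω) (s : (Fin n → BeliefOn Ω') → Fin n → Finset Ω)
    (i j : Fin n) : Prop :=
  i ≠ j ∧ ∃ A : Finset Ω, A ⊆ Ω' ∧ A.Nonempty ∧ A ≠ Ω' ∧
    ∀ q : Fin n → BeliefOn Ω',
      (((q i).P A < (q i).P (Ω' \ A) ∧ (q j).P (Ω' \ A) < (q j).P A) →
        s q i = Ω' \ A ∧ s q j = A) ∧
      (¬((q i).P A < (q i).P (Ω' \ A) ∧ (q j).P (Ω' \ A) < (q j).P A) →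
        s q i = A ∧ s q j = Ω' \ A) ∧
      ∀ k, k ≠ i → k ≠ j → s q k = ∅

/-- A locally bilateral assignment rule: there is a partition `{Ωᵗ}` of `Ω` into nonempty
events and, for each `t`, an `Ωᵗ`-assignment rule that is constant, bilaterally dictatorial,
or bilaterally consensual, such that `sᵢ(p) = ⋃ₜ sᵗᵢ(p|Ωᵗ)`. -/
def IsLocallyBilateral (n : ℕ) (s : (Fin n → Belief Ω) → Fin n → Finset Ω) : Prop :=
  ∃ T : ℕ, ∃ Ωt : Fin T → Finset Ω, ∃ hne : ∀ t, (Ωt t).Nonempty,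
    (∀ t t', t ≠ t' → Disjoint (Ωt t) (Ωt t')) ∧
    Finset.univ.biUnion Ωt = Finset.univ ∧
    ∃ st : (t : Fin T) → (Fin n → BeliefOn (Ωt t)) → Fin n → Finset Ω,
      (∀ t, (∀ q, IsPartitionOf (Ωt t) (st t q)) ∧
        (IsConstantRule (Ωt t) (st t) ∨ (∃ i j, IsDictatorialRule (Ωt t) (st t) i j) ∨
          (∃ i j, IsConsensualRule (Ωt t) (st t) i j))) ∧
      ∀ p : Fin n → Belief Ω, ∀ i : Fin n,
        s p i = Finset.univ.biUnion fun t => st t (fun j => (p j).cond (Ωt t) (hne t)) i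

end Rules

/-
Agent `i`'s share under a locally bilateral rule is the union of its shares under the local
rules. A constant local rule gives `i` a fixed set; a dictatorial or consensual one gives `∅` to
everyone but its two protagonists and a nonempty set to each of them, because no element of a
proper covering is empty or the whole event, and a consensual default is a nonempty proper subset.
So each local share is always nonempty or always empty, and then so is their union.
-/

section LocalRules

variable {Ω : Type*} {Ω' : Finset Ω}

def AlwaysNonemptyOrEmpty {α : Type*} (f : α → Finset Ω) : Prop :=
  (∀ a, (f a).Nonempty) ∨ ∀ a, f a = ∅

theorem ProperCovering.nonempty_of_mem {𝔸 : Finset (Finset Ω)} (h𝔸 : ProperCovering Ω' 𝔸)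
    (hΩ' : Ω'.Nonempty) {A : Finset Ω} (hA : A ∈ 𝔸) : A.Nonempty := by
  obtain ⟨ω, hω⟩ := hΩ'
  obtain ⟨B, hB, hωB⟩ := h𝔸.2.1 ω hω
  by_contra hAe
  rw [Finset.not_nonempty_iff_eq_empty] at hAe
  subst hAe
  exact h𝔸.2.2.1 ∅ hA B hB (Finset.ne_empty_of_mem hωB).symm
    (Finset.empty_ssubset.mpr ⟨ω, hωB⟩)

variable [DecidableEq Ω]

theorem alwaysNonemptyOrEmpty_biUnion {ι α : Type*} [Fintype ι] {β : ι → Type*}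
    (F : (t : ι) → β t → Finset Ω) (g : (t : ι) → α → β t)
    (hF : ∀ t, AlwaysNonemptyOrEmpty (F t)) :
    AlwaysNonemptyOrEmpty fun a => Finset.univ.biUnion fun t => F t (g t a) := by
  by_cases hex : ∃ t, ∀ b, (F t b).Nonempty
  · obtain ⟨t, ht⟩ := hex
    exact Or.inl fun a => (ht (g t a)).mono (Finset.subset_biUnion_of_mem _ (Finset.mem_univ t))
  · simp only [not_exists, not_forall] at hex
    have hempty : ∀ t, ∀ b, F t b = ∅ := fun t =>
      (hF t).resolve_left fun hall => let ⟨b, hb⟩ := hex t; hb (hall b)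
    exact Or.inr fun a => by simp [hempty, Finset.ext_iff]

theorem ProperCovering.sdiff_nonempty_of_mem {𝔸 : Finset (Finset Ω)}
    (h𝔸 : ProperCovering Ω' 𝔸) (hΩ' : Ω'.Nonempty) {A : Finset Ω} (hA : A ∈ 𝔸) :
    (Ω' \ A).Nonempty := by
  rw [Finset.sdiff_nonempty]
  intro hΩ'A
  have hAeq : A = Ω' := (h𝔸.1 A hA).antisymm hΩ'A
  obtain ⟨ω, hω⟩ := hΩ'
  obtain ⟨B, hB, hωB⟩ := h𝔸.2.2.2 ω hω
  have hBA : B ⊂ A := by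
    rw [hAeq]
    exact (Finset.ssubset_iff_of_subset (h𝔸.1 B hB)).mpr ⟨ω, hω, hωB⟩
  exact h𝔸.2.2.1 B hB A hA hBA.ne hBA

variable [Fintype Ω] {n : ℕ} {s : (Fin n → BeliefOn Ω') → Fin n → Finset Ω}

theorem IsConstantRule.alwaysNonemptyOrEmpty (hs : IsConstantRule Ω' s) (k : Fin n) :
    AlwaysNonemptyOrEmpty fun q => s q k := by
  simp only [AlwaysNonemptyOrEmpty]
  obtain ⟨A, -, hA⟩ := hs
  rcases (A k).eq_empty_or_nonempty with hk | hk
  · exact Or.inr fun q => by rw [hA q, hk]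
  · exact Or.inl fun q => by rw [hA q]; exact hk

theorem IsDictatorialRule.alwaysNonemptyOrEmpty {i j : Fin n}
    (hs : IsDictatorialRule Ω' s i j) (hΩ' : Ω'.Nonempty) (k : Fin n) :
    AlwaysNonemptyOrEmpty fun q => s q k := by
  simp only [AlwaysNonemptyOrEmpty]
  obtain ⟨-, 𝔸, h𝔸, hs⟩ := hs
  by_cases hki : k = i
  · subst hki
    exact Or.inl fun q => h𝔸.nonempty_of_mem hΩ' (hs q).1.1
  by_cases hkj : k = j
  · subst hkj
    exact Or.inl fun q => (hs q).2.1 ▸ h𝔸.sdiff_nonempty_of_mem hΩ' (hs q).1.1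
  exact Or.inr fun q => (hs q).2.2 k hki hkj

theorem IsConsensualRule.alwaysNonemptyOrEmpty {i j : Fin n}
    (hs : IsConsensualRule Ω' s i j) (k : Fin n) :
    AlwaysNonemptyOrEmpty fun q => s q k := by
  simp only [AlwaysNonemptyOrEmpty]
  obtain ⟨-, A, hAsub, hA, hAne, hs⟩ := hs
  have hAc : (Ω' \ A).Nonempty := Finset.sdiff_nonempty.mpr fun h => hAne (hAsub.antisymm h)
  have hshares : ∀ q, (s q i = A ∨ s q i = Ω' \ A) ∧ (s q j = A ∨ s q j = Ω' \ A) := by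
    intro q
    by_cases hc : (q i).P A < (q i).P (Ω' \ A) ∧ (q j).P (Ω' \ A) < (q j).P A
    · obtain ⟨hi, hj⟩ := (hs q).1 hc
      exact ⟨Or.inr hi, Or.inl hj⟩
    · obtain ⟨hi, hj⟩ := (hs q).2.1 hc
      exact ⟨Or.inl hi, Or.inr hj⟩
  have hnonempty : ∀ B, B = A ∨ B = Ω' \ A → B.Nonempty := by
    rintro B (rfl | rfl) <;> assumption
  by_cases hki : k = i
  · subst hki
    exact Or.inl fun q => hnonempty _ (hshares q).1
  by_cases hkj : k = j
  · subst hkj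
    exact Or.inl fun q => hnonempty _ (hshares q).2
  exact Or.inr fun q => (hs q).2.2 k hki hkj

end LocalRules

theorem claim1_general (Ω : Type*) [Fintype Ω] [DecidableEq Ω]
    (n : ℕ) (s : (Fin n → Belief Ω) → Fin n → Finset Ω)
    (hs : IsLocallyBilateral n s) :
    ∀ i : Fin n, (∀ p : Fin n → Belief Ω, (s p i).Nonempty) ∨
      (∀ p : Fin n → Belief Ω, s p i = ∅) := by
  obtain ⟨_, Ωt, hne, -, -, st, hst, hs_eq⟩ := hs
  intro i
  have hlocal : ∀ t, AlwaysNonemptyOrEmpty fun q => st t q i := fun t => by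
    rcases (hst t).2 with hc | ⟨_, _, hd⟩ | ⟨_, _, hc⟩
    · exact hc.alwaysNonemptyOrEmpty i
    · exact hd.alwaysNonemptyOrEmpty (hne t) i
    · exact hc.alwaysNonemptyOrEmpty i
  simp only [hs_eq]
  exact alwaysNonemptyOrEmpty_biUnion (fun t q => st t q i)
    (fun t (p : Fin n → Belief Ω) j => (p j).cond (Ωt t) (hne t)) hlocal

/-- **Claim 1.** Let `s` be a locally bilateral assignment rule on the
profiles of beliefs of `n ≥ 2` agents over a finite state space `Ω` with `|Ω| ≥ 2`.
Then for every agent `i`, either `sᵢ(p) ≠ ∅` for all belief profiles `p`, or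
`sᵢ(p) = ∅` for all belief profiles `p`. -/
theorem claim1 (Ω : Type*) [Fintype Ω] [DecidableEq Ω] (hΩ : 2 ≤ Fintype.card Ω)
    (n : ℕ) (hn : 2 ≤ n) (s : (Fin n → Belief Ω) → Fin n → Finset Ω)
    (hs : IsLocallyBilateral n s) :
    ∀ i : Fin n, (∀ p : Fin n → Belief Ω, (s p i).Nonempty) ∨
      (∀ p : Fin n → Belief Ω, s p i = ∅) :=
  claim1_general Ω n s hs
end
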